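/- Let G be a finite p-group of order p^n. Then the Schur multiplier M(G) has order at most p^{n(n-1)/2}. -/

import Mathlib

/-!
Put `H = F/[R,F]` and `Z = R/[R,F]`: then `Z` is central in `H`, `H/Z ≅ G`, and `M(G)` is
`Z ∩ H'`. For any central `Z` of index `p^n` we show `|Z ∩ H'| ∣ p^(n choose 2)` by induction
on `n`. If `Z ≠ H`, lift a nontrivial central element of the `p`-group `H/Z` to `z ∈ H`. All
commutators `[z, g]` are central, so `g ↦ [z, g]` is a homomorphism; its image `K` lies in
`Z ∩ H'`, and its kernel contains `W = ⟨z, Z⟩`, so `|K| ∣ |H : W| ∣ p^(n-1)`. Modulo `K` the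
subgroup `W` becomes central of index `p^(n-1)`, and `Z ∩ H'` maps into `W/K ∩ (H/K)'`, which
gives the bound `p^(n-1) · p^((n-1) choose 2) = p^(n choose 2)`.
-/

open Subgroup

/-- Witt formula: number of basic commutators of weight `n` on `d` letters. -/
def wittChi (n d : ℕ) : ℕ :=
  ((∑ m ∈ n.divisors, ArithmeticFunction.moebius m * (d : ℤ) ^ (n / m)) / n).toNat

/-- `iterCommutator R c = [R, F, …, F]` with `c` copies of `F`. -/
def iterCommutator {F : Type*} [Group F] (R : Subgroup F) : ℕ → Subgroup F
  | 0 => R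
  | c + 1 => ⁅iterCommutator R c, (⊤ : Subgroup F)⁆

instance iterCommutator_normal {F : Type*} [Group F] (R : Subgroup F) [h : R.Normal]
    (c : ℕ) : (iterCommutator R c).Normal := by
  induction c with
  | zero => exact h
  | succ n ih => exact Subgroup.commutator_normal _ _

/-- A free presentation `1 → R → F → G → 1` of a group `G`. -/
structure FreePresentation (G : Type) [Group G] where
  ι : Type
  π : FreeGroup ι →* G
  surj : Function.Surjective π

/-- The `c`-nilpotent multiplier `M^(c)(G) = (R ∩ γ_{c+1}(F)) / [R, _c F]`
(the Schur multiplier when `c = 1`), realized as a subgroup of `F / [R, _c F]`. -/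
def nilMult {G : Type} [Group G] (P : FreePresentation G) (c : ℕ) :
    Subgroup (FreeGroup P.ι ⧸ iterCommutator P.π.ker c) :=
  Subgroup.map (QuotientGroup.mk' (iterCommutator P.π.ker c))
    (P.π.ker ⊓ Subgroup.lowerCentralSeries (⊤ : Subgroup (FreeGroup P.ι)) c)

open scoped commutatorElement

section

variable {H : Type*} [Group H]

theorem Subgroup.normal_of_le_center {Z : Subgroup H} (hZ : Z ≤ center H) : Z.Normal where
  conj_mem x hx g := by rw [mem_center_iff.mp (hZ hx) g, mul_inv_cancel_right]; exact hx

theorem QuotientGroup.mk_mem_center_iff {K : Subgroup H} [K.Normal] {z : H} :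
    (z : H ⧸ K) ∈ center (H ⧸ K) ↔ ∀ g : H, ⁅z, g⁆ ∈ K := by
  rw [mem_center_iff, QuotientGroup.mk_surjective.forall]
  refine forall_congr' fun g => ?_
  have hmk : ((⁅z, g⁆ : H) : H ⧸ K) = ⁅(z : H ⧸ K), (g : H ⧸ K)⁆ :=
    map_commutatorElement (QuotientGroup.mk' K) z g
  rw [← QuotientGroup.eq_one_iff, hmk, commutatorElement_eq_one_iff_commute, eq_comm]
  rfl

theorem Subgroup.map_commutator_le {H' : Type*} [Group H'] (f : H →* H') :
    (_root_.commutator H).map f ≤ _root_.commutator H' := by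
  rw [map_commutator_eq]
  exact commutator_mono le_top le_top

theorem Subgroup.card_eq_card_mul_card_map_mk' {K S : Subgroup H} [K.Normal] (hKS : K ≤ S) :
    Nat.card S = Nat.card K * Nat.card (S.map (QuotientGroup.mk' K)) := by
  rw [← relIndex_ker S, QuotientGroup.ker_mk', ← relIndex_bot_left, ← relIndex_bot_left,
    relIndex_mul_relIndex _ _ _ bot_le hKS]

theorem Subgroup.index_dvd_pow_of_ne_bot {p n : ℕ} (hp : p.Prime) {A : Subgroup H}
    (hA : A ≠ ⊥) (hH : Nat.card H ∣ p ^ (n + 1)) : A.index ∣ p ^ n := by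
  have hAp : Nat.card A ∣ p ^ (n + 1) := (card_subgroup_dvd_card A).trans hH
  obtain ⟨k, -, hk⟩ := (Nat.dvd_prime_pow hp).mp hAp
  have hk0 : k ≠ 0 := by rintro rfl; exact hA (card_eq_one.mp hk)
  rw [← A.card_mul_index, hk] at hH
  have : A.index * p ∣ p ^ n * p := by
    rw [← pow_succ, mul_comm]
    exact (mul_dvd_mul_right (dvd_pow_self p hk0) _).trans hH
  exact (Nat.mul_dvd_mul_iff_right hp.pos).mp this

def commutatorHomOfCentral (z : H) (hz : ∀ g : H, ⁅z, g⁆ ∈ center H) : H →* H where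
  toFun g := ⁅z, g⁆
  map_one' := commutatorElement_one_right z
  map_mul' a b := by
    have hconj : ⁅z, a * b⁆ = ⁅z, a⁆ * (a * ⁅z, b⁆ * a⁻¹) := by
      simp only [commutatorElement_def]; group
    rw [hconj, mem_center_iff.mp (hz b) a, mul_inv_cancel_right]

theorem Subgroup.exists_commutator_mem_and_index_zpowers_sup_dvd {p n : ℕ} (hp : p.Prime)
    {Z : Subgroup H} [Z.Normal] (hZ : Z ≠ ⊤) (hZi : Z.index ∣ p ^ (n + 1)) :
    ∃ z : H, (∀ g : H, ⁅z, g⁆ ∈ Z) ∧ (zpowers z ⊔ Z).index ∣ p ^ n := by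
  have hcard : Nat.card (H ⧸ Z) ∣ p ^ (n + 1) := index_eq_card Z ▸ hZi
  obtain ⟨k, -, hk⟩ := (Nat.dvd_prime_pow hp).mp hcard
  have : Fact p.Prime := ⟨hp⟩
  have : Finite (H ⧸ Z) := Nat.finite_of_card_ne_zero (by rw [hk]; exact pow_ne_zero _ hp.ne_zero)
  have : Nontrivial (H ⧸ Z) := QuotientGroup.nontrivial_iff.mpr hZ
  have := (IsPGroup.of_card hk).center_nontrivial
  obtain ⟨⟨zb, hzb⟩, hzb1⟩ := exists_ne (1 : center (H ⧸ Z))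
  obtain ⟨z, rfl⟩ := QuotientGroup.mk_surjective zb
  refine ⟨z, QuotientGroup.mk_mem_center_iff.mp hzb, ?_⟩
  have hmap : (zpowers z ⊔ Z).map (QuotientGroup.mk' Z) = zpowers (z : H ⧸ Z) := by
    rw [Subgroup.map_sup, MonoidHom.map_zpowers, QuotientGroup.map_mk'_self, sup_bot_eq]; rfl
  rw [← (zpowers z ⊔ Z).index_map_eq (QuotientGroup.mk'_surjective Z)
    ((QuotientGroup.ker_mk' Z).trans_le le_sup_right), hmap]
  exact index_dvd_pow_of_ne_bot hp (zpowers_ne_bot.mpr fun h => hzb1 (Subtype.ext h)) hcard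

theorem Subgroup.exists_normal_le_inf_commutator_of_le_center {p n : ℕ} (hp : p.Prime)
    {Z : Subgroup H} (hZc : Z ≤ center H) (hZ : Z ≠ ⊤) (hZi : Z.index ∣ p ^ (n + 1)) :
    ∃ (K : Subgroup H) (_ : K.Normal) (W : Subgroup H), K ≤ Z ⊓ _root_.commutator H ∧ Z ≤ W ∧
      W.map (QuotientGroup.mk' K) ≤ center (H ⧸ K) ∧ W.index ∣ p ^ n ∧ Nat.card K ∣ p ^ n := by
  have := normal_of_le_center hZc
  obtain ⟨z, hzZ, hWi⟩ := exists_commutator_mem_and_index_zpowers_sup_dvd hp hZ hZi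
  set φ := commutatorHomOfCentral z fun g => hZc (hzZ g)
  have hKZ : φ.range ≤ Z := by rintro _ ⟨g, rfl⟩; exact hzZ g
  have := normal_of_le_center (hKZ.trans hZc)
  have hWker : zpowers z ⊔ Z ≤ φ.ker :=
    sup_le (zpowers_le.mpr (commutatorElement_self z)) fun ζ hζ =>
      commutatorElement_eq_one_iff_commute.mpr (mem_center_iff.mp (hZc hζ) z)
  refine ⟨φ.range, inferInstance, zpowers z ⊔ Z, le_inf hKZ ?_, le_sup_right, ?_, hWi, ?_⟩
  · rintro _ ⟨g, rfl⟩
    exact commutator_mem_commutator (mem_top z) (mem_top g)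
  · refine map_le_iff_le_comap.mpr (sup_le (zpowers_le.mpr ?_) fun ζ hζ => ?_)
    · exact QuotientGroup.mk_mem_center_iff.mpr fun g => ⟨g, rfl⟩
    · refine QuotientGroup.mk_mem_center_iff.mpr fun g => ?_
      rw [commutatorElement_eq_one_iff_commute.mpr (mem_center_iff.mp (hZc hζ) g).symm]
      exact one_mem _
  · rw [← index_ker]
    exact (index_dvd_of_le hWker).trans hWi

theorem Subgroup.card_inf_commutator_dvd_pow_choose_two {p n : ℕ} (hp : p.Prime)
    {Z : Subgroup H} (hZc : Z ≤ center H) (hZi : Z.index ∣ p ^ n) :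
    Nat.card ↥(Z ⊓ _root_.commutator H) ∣ p ^ n.choose 2 := by
  induction n generalizing H with
  | zero =>
    rw [pow_zero, Nat.dvd_one, index_eq_one] at hZi
    subst hZi
    rw [(commutator_eq_bot_iff_center_eq_top H).mpr (top_le_iff.mp hZc), inf_bot_eq, card_bot]
    exact one_dvd _
  | succ n ih =>
    by_cases hZ : Z = ⊤
    · subst hZ
      rw [(commutator_eq_bot_iff_center_eq_top H).mpr (top_le_iff.mp hZc), inf_bot_eq, card_bot]
      exact one_dvd _
    obtain ⟨K, _, W, hK, hZW, hWc, hWi, hKi⟩ :=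
      exists_normal_le_inf_commutator_of_le_center hp hZc hZ hZi
    have hWi' : (W.map (QuotientGroup.mk' K)).index ∣ p ^ n := by
      rwa [W.index_map_eq (QuotientGroup.mk'_surjective K)
        ((QuotientGroup.ker_mk' K).trans_le ((hK.trans inf_le_left).trans hZW))]
    have hmap : (Z ⊓ _root_.commutator H).map (QuotientGroup.mk' K) ≤
        W.map (QuotientGroup.mk' K) ⊓ _root_.commutator (H ⧸ K) :=
      (map_inf_le _ _ _).trans (inf_le_inf (map_mono hZW) (map_commutator_le _))
    rw [card_eq_card_mul_card_map_mk' hK, Nat.choose_succ_succ', Nat.choose_one_right, pow_add]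
    exact mul_dvd_mul hKi ((card_dvd_of_le hmap).trans (ih hWc hWi'))

end

/-- Green's theorem: the Schur multiplier of a finite `p`-group of order `p^n`
has order at most `p^{n(n-1)/2}`. -/
theorem green_bound (G : Type) [Group G] (p n : ℕ) (hp : p.Prime)
    (hG : Nat.card G = p ^ n) (P : FreePresentation G) :
    Nat.card (nilMult P 1) ≤ p ^ (n * (n - 1) / 2) := by
  set R := P.π.ker
  set N := iterCommutator R 1
  have hRc : R.map (QuotientGroup.mk' N) ≤ center _ := by
    rintro _ ⟨r, hr, rfl⟩
    exact QuotientGroup.mk_mem_center_iff.mpr fun g => commutator_mem_commutator hr (mem_top g)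
  have hRi : (R.map (QuotientGroup.mk' N)).index = p ^ n := by
    rw [R.index_map_eq (QuotientGroup.mk'_surjective N)
        ((QuotientGroup.ker_mk' N).trans_le (commutator_le_left R ⊤)),
      index_ker, MonoidHom.range_eq_top.mpr P.surj, card_top, hG]
  have hle : nilMult P 1 ≤ R.map (QuotientGroup.mk' N) ⊓ _root_.commutator _ := by
    refine (map_inf_le _ _ _).trans (inf_le_inf_left _ ?_)
    rw [top_lowerCentralSeries_one]
    exact map_commutator_le _
  rw [← Nat.choose_two_right]
  exact Nat.le_of_dvd (pow_pos hp.pos _)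
    ((card_dvd_of_le hle).trans (card_inf_commutator_dvd_pow_choose_two hp hRc hRi.dvd))
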